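/- arXiv:1203.1557 — 2 statements merged into one kernel-verified Lean document; each statement's English description precedes it below -/
import Mathlib

section
/- For every nonnegative integer n and every integer p with 0 ≤ p ≤ n, the sum over k from p+1 to n of H_{n−k}/(k−p) equals H_{n−p}^2 − H_{n−p}^{(2)}. -/
/-- The `n`-th harmonic number `H_n = ∑_{k=1}^n 1/k`, with `H_0 = 0`. -/
def H (n : ℕ) : ℚ := ∑ k ∈ Finset.range n, 1 / ((k : ℚ) + 1)

/-- The generalized harmonic number of order 2, `H_n^{(2)} = ∑_{k=1}^n 1/k^2`, with `H_0^{(2)} = 0`. -/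
def H2 (n : ℕ) : ℚ := ∑ k ∈ Finset.range n, 1 / ((k : ℚ) + 1) ^ 2

lemma H_succ (n : ℕ) : H (n + 1) = H n + 1 / ((n : ℚ) + 1) := by
  simp [H, Finset.sum_range_succ]

lemma H2_succ (n : ℕ) : H2 (n + 1) = H2 n + 1 / ((n : ℚ) + 1) ^ 2 := by
  simp [H2, Finset.sum_range_succ]

lemma key (m : ℕ) :
    ∑ i ∈ Finset.range m, H (m - 1 - i) / ((i : ℚ) + 1) = H m ^ 2 - H2 m := by
  induction m with
  | zero => simp [H, H2]
  | succ m ih =>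
    rw [Finset.sum_range_succ]
    have e1 : ∀ i ∈ Finset.range m,
        H (m + 1 - 1 - i) / ((i : ℚ) + 1)
          = H (m - 1 - i) / ((i : ℚ) + 1)
            + 1 / ((((m : ℚ) - i) * ((i : ℚ) + 1))) := by
      intro i hi
      have hi' : i < m := Finset.mem_range.mp hi
      have h1 : m + 1 - 1 - i = (m - 1 - i) + 1 := by omega
      have h2 : ((m - 1 - i : ℕ) : ℚ) = (m : ℚ) - 1 - i := by
        push_cast [Nat.cast_sub (by omega : 1 + i ≤ m), Nat.sub_sub]; ring
      rw [h1, H_succ, h2]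
      have h3 : (m : ℚ) - 1 - i + 1 = (m : ℚ) - i := by ring
      rw [h3, add_div, div_div]
    rw [Finset.sum_congr rfl e1, Finset.sum_add_distrib, ih]
    have e2 : ∀ i ∈ Finset.range m,
        (1 : ℚ) / (((m : ℚ) - i) * ((i : ℚ) + 1))
          = (1 / ((m : ℚ) + 1)) * (1 / ((i : ℚ) + 1) + 1 / ((m : ℚ) - i)) := by
      intro i hi
      have hi' : i < m := Finset.mem_range.mp hi
      have hmi : (m : ℚ) - i ≠ 0 := by
        have : (i : ℚ) < m := by exact_mod_cast hi'
        intro h; nlinarith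
      have hip : ((i : ℚ) + 1) ≠ 0 := by positivity
      have hmp : ((m : ℚ) + 1) ≠ 0 := by positivity
      field_simp
      ring
    rw [Finset.sum_congr rfl e2, ← Finset.mul_sum, Finset.sum_add_distrib]
    have e3 : ∑ i ∈ Finset.range m, (1 : ℚ) / ((m : ℚ) - i) = H m := by
      have hr := Finset.sum_range_reflect (fun i => (1 : ℚ) / ((i : ℚ) + 1)) m
      calc ∑ i ∈ Finset.range m, (1 : ℚ) / ((m : ℚ) - i)
          = ∑ i ∈ Finset.range m, (1 : ℚ) / (((m - 1 - i : ℕ) : ℚ) + 1) := by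
            apply Finset.sum_congr rfl
            intro i hi
            have hi' : i < m := Finset.mem_range.mp hi
            have hc : ((m - 1 - i : ℕ) : ℚ) = (m : ℚ) - 1 - i := by
              push_cast [Nat.cast_sub (by omega : 1 + i ≤ m), Nat.sub_sub]; ring
            rw [hc]; ring_nf
        _ = ∑ i ∈ Finset.range m, (1 : ℚ) / ((i : ℚ) + 1) := hr
        _ = H m := rfl
    rw [e3]
    have hH : ∑ i ∈ Finset.range m, (1:ℚ) / ((i : ℚ) + 1) = H m := rfl
    rw [hH, H_succ, H2_succ]
    have hs : m + 1 - 1 - m = 0 := by omega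
    rw [hs]
    have h0 : H 0 = 0 := by simp [H]
    rw [h0]
    have hmp : ((m : ℚ) + 1) ≠ 0 := by positivity
    field_simp
    ring

theorem stmt_3 (n p : ℕ) (hp : p ≤ n) :
    ∑ k ∈ Finset.Icc (p + 1) n, H (n - k) / ((k : ℚ) - p) =
      H (n - p) ^ 2 - H2 (n - p) := by
  rw [← key (n - p)]
  apply Finset.sum_bij' (fun k _ => k - p - 1) (fun i _ => i + p + 1)
  · intro k hk
    simp only [Finset.mem_Icc] at hk
    simp only [Finset.mem_range]; omega
  · intro i hi
    simp only [Finset.mem_range] at hi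
    simp only [Finset.mem_Icc]; omega
  · intro k hk; simp only [Finset.mem_Icc] at hk; omega
  · intro i hi; omega
  · intro k hk
    simp only [Finset.mem_Icc] at hk
    have h1 : n - p - 1 - (k - p - 1) = n - k := by omega
    have h2 : ((k - p - 1 : ℕ) : ℚ) + 1 = (k : ℚ) - p := by
      have : ((k - p - 1 : ℕ) : ℚ) = (k : ℚ) - p - 1 := by
        push_cast [Nat.cast_sub (by omega : p + 1 ≤ k), Nat.sub_sub]; ring
      rw [this]; ring
    rw [h1, h2]
end

section
/- For every nonnegative integer n, the sum over k from 0 to n of H_{n−k}/(k+3) equals H_{n+1}^2 − H_{n+1}^{(2)} − (3n^2+7n−2)/(2(n+2)(n+3))·H_{n+1} − (n+1)/((n+2)(n+3)). -/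
lemma Hsucc (m : ℕ) : H (m + 1) = H m + 1 / ((m : ℚ) + 1) :=
  Finset.sum_range_succ _ m

lemma H2succ (m : ℕ) : H2 (m + 1) = H2 m + 1 / ((m : ℚ) + 1) ^ 2 :=
  Finset.sum_range_succ _ m

lemma shift3 (n : ℕ) : ∑ k ∈ Finset.range n, (1 : ℚ) / ((k : ℚ) + 3) = H (n + 2) - 3 / 2 := by
  induction n with
  | zero => simp [H, Finset.sum_range_succ]; norm_num
  | succ n ih =>
    have h := Hsucc (n + 2)
    rw [Finset.sum_range_succ, ih, show n + 1 + 2 = (n + 2) + 1 from rfl, h]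
    push_cast; ring

lemma reflectH (n : ℕ) :
    ∑ k ∈ Finset.range (n + 1), (1 : ℚ) / (((n - k : ℕ) : ℚ) + 1) = H (n + 1) := by
  have := Finset.sum_range_reflect (fun j => (1 : ℚ) / ((j : ℚ) + 1)) (n + 1)
  simpa [H] using this

theorem stmt_14 (n : ℕ) :
    ∑ k ∈ Finset.range (n + 1), H (n - k) / ((k : ℚ) + 3) =
      H (n + 1) ^ 2 - H2 (n + 1)
        - (3 * (n : ℚ) ^ 2 + 7 * (n : ℚ) - 2) / (2 * ((n : ℚ) + 2) * ((n : ℚ) + 3)) * H (n + 1)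
        - ((n : ℚ) + 1) / (((n : ℚ) + 2) * ((n : ℚ) + 3)) := by
  induction n with
  | zero =>
    simp [H, H2, Finset.sum_range_succ]
    norm_num
  | succ n ih =>
    have key : ∑ k ∈ Finset.range (n + 1 + 1), H (n + 1 - k) / ((k : ℚ) + 3)
        = ∑ k ∈ Finset.range (n + 1), H (n - k) / ((k : ℚ) + 3)
          + ∑ k ∈ Finset.range (n + 1), 1 / (((n - k : ℕ) : ℚ) + 1) / ((k : ℚ) + 3) := by
      rw [Finset.sum_range_succ, Nat.sub_self]
      have h0 : H 0 = 0 := by simp [H]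
      rw [h0, zero_div, add_zero, ← Finset.sum_add_distrib]
      refine Finset.sum_congr rfl fun k hk => ?_
      have hk' : k ≤ n := Nat.lt_succ_iff.mp (Finset.mem_range.mp hk)
      have hs : n + 1 - k = (n - k) + 1 := by omega
      rw [hs, Hsucc, add_div]
    have split : ∑ k ∈ Finset.range (n + 1), 1 / (((n - k : ℕ) : ℚ) + 1) / ((k : ℚ) + 3)
        = (1 / ((n : ℚ) + 4)) *
          (∑ k ∈ Finset.range (n + 1), (1 : ℚ) / (((n - k : ℕ) : ℚ) + 1)
            + ∑ k ∈ Finset.range (n + 1), (1 : ℚ) / ((k : ℚ) + 3)) := by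
      rw [← Finset.sum_add_distrib, Finset.mul_sum]
      refine Finset.sum_congr rfl fun k hk => ?_
      have hk' : k ≤ n := Nat.lt_succ_iff.mp (Finset.mem_range.mp hk)
      have hc : ((n - k : ℕ) : ℚ) = (n : ℚ) - (k : ℚ) := by
        rw [Nat.cast_sub hk']
      rw [hc]
      have hkn : (k : ℚ) ≤ (n : ℚ) := by exact_mod_cast hk'
      have h1 : (n : ℚ) - (k : ℚ) + 1 ≠ 0 := by linarith
      have h2 : (k : ℚ) + 3 ≠ 0 := by positivity
      have h3 : (n : ℚ) + 4 ≠ 0 := by positivity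
      field_simp
      ring
    rw [key, ih, split, reflectH, shift3]
    have hH : H (n + 1 + 1) = H (n + 1) + 1 / ((n : ℚ) + 2) := by
      rw [Hsucc]; push_cast; ring
    have hH2 : H2 (n + 1 + 1) = H2 (n + 1) + 1 / ((n : ℚ) + 2) ^ 2 := by
      rw [H2succ]; push_cast; ring
    have hH3 : H (n + 1 + 2) = H (n + 1) + 1 / ((n : ℚ) + 2) + 1 / ((n : ℚ) + 3) := by
      rw [show n + 1 + 2 = (n + 1 + 1) + 1 from rfl, Hsucc, hH]; push_cast; ring
    rw [hH, hH2, hH3]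
    push_cast
    have h2 : (n : ℚ) + 2 ≠ 0 := by positivity
    have h3 : (n : ℚ) + 3 ≠ 0 := by positivity
    have h4 : (n : ℚ) + 4 ≠ 0 := by positivity
    field_simp
    ring
end
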